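/- arXiv:2003.10000 — 4 statements merged into one kernel-verified Lean document; each statement's English description precedes it below -/
import Mathlib

section
/- Every finite 3-regular graph G = (V, E) admits a proper encoding: a function assigning to each vertex v a word w(v) of length 4 over the alphabet V such that (w(v))_1 = v, the multiset {(w(v))_2, (w(v))_3, (w(v))_4} equals the set of neighbors of v, and for every vertex u and every position p ∈ {1,2,3,4} there is exactly one vertex v with (w(v))_p = u. -/
/-!
Split the neighborhood relation of `G` into three permutations of `V`: the rows `N(v)` and the
columns `{v | u ∈ N(v)}` of this relation all have size 3, so it is a 3-regular bipartite graph
on `V ⊔ V`, which by König's theorem is a union of three perfect matchings. Each matching is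
found with Hall's theorem, whose condition holds by double counting, and removing it leaves a
regular relation of one degree less. The word of `v` is `v` followed by its images under the
three permutations.
-/

open Finset

namespace Finset

variable {V : Type*} [Fintype V] [DecidableEq V] {k : ℕ} {t : V → Finset V}

theorem card_le_card_biUnion_of_regular (hk : 0 < k) (hrow : ∀ v, k ≤ #(t v))
    (hcol : ∀ u, #{v | u ∈ t v} ≤ k) (s : Finset V) : #s ≤ #(s.biUnion t) := by
  refine Nat.le_of_mul_le_mul_right
    (card_mul_le_card_mul (fun v u => u ∈ t v) (fun v hv => ?_) (fun u _ => ?_)) hk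
  · rw [bipartiteAbove, filter_mem_eq_inter, inter_eq_right.mpr (subset_biUnion_of_mem t hv)]
    exact hrow v
  · exact (card_le_card (filter_subset_filter _ (subset_univ s))).trans (hcol u)

theorem exists_perm_forall_mem_of_regular (hk : 0 < k) (hrow : ∀ v, k ≤ #(t v))
    (hcol : ∀ u, #{v | u ∈ t v} ≤ k) : ∃ σ : Equiv.Perm V, ∀ v, σ v ∈ t v := by
  obtain ⟨f, hinj, hmem⟩ := (all_card_le_biUnion_card_iff_exists_injective t).mp
    (card_le_card_biUnion_of_regular hk hrow hcol)
  exact ⟨Equiv.ofBijective f (Finite.injective_iff_bijective.mp hinj), hmem⟩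

theorem card_filter_mem_erase_perm (σ : Equiv.Perm V) (hσ : ∀ v, σ v ∈ t v) (u : V) :
    #{v | u ∈ (t v).erase (σ v)} = #{v | u ∈ t v} - 1 := by
  have hfilter : ({v | u ∈ (t v).erase (σ v)} : Finset V) = ({v | u ∈ t v} : Finset V).erase
      (σ.symm u) := by
    ext v
    simp only [mem_filter, mem_erase, mem_univ, true_and, Ne, σ.eq_symm_apply, eq_comm]
  rw [hfilter, card_erase_of_mem (by simpa using hσ (σ.symm u))]

/-- König's theorem for regular bipartite graphs, with both sides equal to `V`. -/
theorem exists_perms_eq_image_of_regular :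
    ∀ (k : ℕ) (t : V → Finset V), (∀ v, #(t v) = k) → (∀ u, #{v | u ∈ t v} = k) →
      ∃ σ : Fin k → Equiv.Perm V, ∀ v, t v = univ.image (fun i => σ i v)
  | 0, t, hrow, _ => ⟨Fin.elim0, fun v => by simpa using hrow v⟩
  | k + 1, t, hrow, hcol => by
    obtain ⟨σ₀, hσ₀⟩ := exists_perm_forall_mem_of_regular k.succ_pos (fun v => (hrow v).ge)
      (fun u => (hcol u).le)
    obtain ⟨σ, hσ⟩ := exists_perms_eq_image_of_regular k (fun v => (t v).erase (σ₀ v))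
      (fun v => by rw [card_erase_of_mem (hσ₀ v), hrow, Nat.add_sub_cancel])
      (fun u => by rw [card_filter_mem_erase_perm σ₀ hσ₀, hcol, Nat.add_sub_cancel])
    refine ⟨Fin.cons σ₀ σ, fun v => ?_⟩
    rw [← insert_erase (hσ₀ v), hσ v]
    ext u
    simp [Fin.exists_fin_succ, eq_comm]

end Finset

/-- Every finite 3-regular graph admits a proper encoding: an assignment of a word
`w v : Fin 4 → V` to each vertex `v`, whose first letter is `v`, whose remaining letters
are exactly the neighbors of `v`, and such that every vertex label appears in each of the
four positions in exactly one word. -/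
theorem exists_proper_encoding {V : Type*} [Fintype V] [DecidableEq V]
    (G : SimpleGraph V) [DecidableRel G.Adj] (hreg : G.IsRegularOfDegree 3) :
    ∃ w : V → Fin 4 → V,
      (∀ v, w v 0 = v) ∧
      (∀ v, ({w v 1, w v 2, w v 3} : Finset V) = G.neighborFinset v) ∧
      (∀ (u : V) (p : Fin 4), ∃! v, w v p = u) := by
  have hrow : ∀ v, #(G.neighborFinset v) = 3 := fun v =>
    (G.card_neighborFinset_eq_degree v).trans (hreg v)
  have hcol : ∀ u, #{v | u ∈ G.neighborFinset v} = 3 := fun u => by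
    rw [← hrow u]
    congr 1
    ext v
    simp [G.adj_comm]
  obtain ⟨σ, hσ⟩ := exists_perms_eq_image_of_regular 3 (fun v => G.neighborFinset v) hrow hcol
  let τ : Fin 4 → Equiv.Perm V := Fin.cons 1 σ
  refine ⟨fun v p => τ p v, fun v => rfl, fun v => ?_, fun u p => (τ p).bijective.existsUnique u⟩
  change {σ 0 v, σ 1 v, σ 2 v} = _
  rw [hσ v]
  ext u
  simp [Fin.exists_fin_succ, eq_comm]
end

section
/- If an orientation of the edges of the bidirected version of a 3-regular graph G admits an edge coloring with 3 colors such that every vertex has exactly one incoming edge and exactly one outgoing edge of each color, then G admits a proper encoding (defined position-wise by the colors of outgoing edges). -/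
/-!
The word of `v` is `v` followed by its out-neighbours along the arcs of colours 0, 1, 2.
Since each colour leaves `v` exactly once, every neighbour `u` is the out-neighbour of
colour `c v u`, so the three letters are exactly the neighbourhood; since each colour enters
`u` exactly once, `v ↦ (out-neighbour of colour i)` is a bijection, which is the condition
on position `i + 1`.
-/

section OutColoring

variable {V ι : Type*} {G : SimpleGraph V} {c : V → V → ι} {f : V → ι → V}

theorem apply_color_eq_of_adj (hout : ∀ v i, ∃! u, G.Adj v u ∧ c v u = i)
    (hf : ∀ v i, G.Adj v (f v i) ∧ c v (f v i) = i) {v u : V} (h : G.Adj v u) :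
    f v (c v u) = u :=
  (hout v (c v u)).unique (hf v _) ⟨h, rfl⟩

theorem range_eq_neighborSet (hout : ∀ v i, ∃! u, G.Adj v u ∧ c v u = i)
    (hf : ∀ v i, G.Adj v (f v i) ∧ c v (f v i) = i) (v : V) :
    Set.range (f v) = G.neighborSet v := by
  ext u
  exact ⟨fun ⟨i, hi⟩ => hi ▸ (hf v i).1, fun h => ⟨c v u, apply_color_eq_of_adj hout hf h⟩⟩

theorem existsUnique_apply_eq (hout : ∀ v i, ∃! u, G.Adj v u ∧ c v u = i)
    (hin : ∀ v i, ∃! u, G.Adj u v ∧ c u v = i)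
    (hf : ∀ v i, G.Adj v (f v i) ∧ c v (f v i) = i) (u : V) (i : ι) :
    ∃! v, f v i = u := by
  obtain ⟨v, ⟨hvu, hvi⟩, hv⟩ := hin u i
  exact ⟨v, hvi ▸ apply_color_eq_of_adj hout hf hvu, fun x hx => hv x (hx ▸ hf x i)⟩

end OutColoring

theorem coloring_gives_proper_encoding_general {V : Type*} [Fintype V] [DecidableEq V]
    (G : SimpleGraph V) [DecidableRel G.Adj]
    (c : V → V → Fin 3)
    (hout : ∀ (v : V) (i : Fin 3), ∃! u, G.Adj v u ∧ c v u = i)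
    (hin : ∀ (v : V) (i : Fin 3), ∃! u, G.Adj u v ∧ c u v = i) :
    ∃ w : V → Fin 4 → V,
      (∀ v, w v 0 = v) ∧
      (∀ v, ({w v 1, w v 2, w v 3} : Finset V) = G.neighborFinset v) ∧
      (∀ (u : V) (p : Fin 4), ∃! v, w v p = u) ∧
      (∀ v u, G.Adj v u → w v (c v u).succ = u) := by
  choose f hf using fun v i => (hout v i).exists
  refine ⟨fun v => Fin.cons v (f v), fun v => rfl, fun v => ?_, fun u p => ?_,
    fun v u h => ?_⟩
  · change ({f v 0, f v 1, f v 2} : Finset V) = _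
    ext x
    rw [SimpleGraph.mem_neighborFinset, ← SimpleGraph.mem_neighborSet,
      ← range_eq_neighborSet hout hf v]
    simp [Fin.exists_fin_succ, eq_comm]
  · cases p using Fin.cases with
    | zero => exact ⟨u, rfl, fun _ h => h⟩
    | succ i => simpa using existsUnique_apply_eq hout hin hf u i
  · simpa using apply_color_eq_of_adj hout hf h

/-- If the arcs of the bidirected version of a finite 3-regular graph `G` can be colored
with 3 colors (`c u v` being the color of the arc `(u,v)`) so that every vertex has exactly
one outgoing and exactly one incoming arc of each color, then `G` admits a proper encoding,
defined position-wise by the colors of the outgoing arcs. -/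
theorem coloring_gives_proper_encoding {V : Type*} [Fintype V] [DecidableEq V]
    (G : SimpleGraph V) [DecidableRel G.Adj] (hreg : G.IsRegularOfDegree 3)
    (c : V → V → Fin 3)
    (hout : ∀ (v : V) (i : Fin 3), ∃! u, G.Adj v u ∧ c v u = i)
    (hin : ∀ (v : V) (i : Fin 3), ∃! u, G.Adj u v ∧ c u v = i) :
    ∃ w : V → Fin 4 → V,
      (∀ v, w v 0 = v) ∧
      (∀ v, ({w v 1, w v 2, w v 3} : Finset V) = G.neighborFinset v) ∧
      (∀ (u : V) (p : Fin 4), ∃! v, w v p = u) ∧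
      (∀ v u, G.Adj v u → w v (c v u).succ = u) :=
  coloring_gives_proper_encoding_general G c hout hin
end

section
/- In the adversarial family of dictionaries D_m (containing m+1 words starting with α over {β,γ} and m constant words η_i^k for distinct letters η_i ∉ {α,β,γ}), an optimal evil setter can force at least m failed guesses: for any sequence of guesses, the setter may answer negatively until only one constant word remains, forcing a failed guess on α and on at least m−1 of the letters η_i. -/
/-- On the adversarial dictionary `D_m` (consisting of `m+1` words starting with `α`
whose remaining letters are in `{β, γ}` with both occurring, together with the `m`
constant words `η_i^k`), an optimal evil setter can force at least `m` failed guesses: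
for every ordering `s` of the guesses covering the whole alphabet, at least `m` of the
guesses can be rejected, i.e., answered negatively consistently with some word of `D_m`
avoiding all guesses made so far. -/
theorem adversarial_dictionary_forces_m_fails
    {σ : Type*} [Fintype σ] [DecidableEq σ]
    (k m : ℕ) (hm : 1 ≤ m) (hk : 0 < k)
    (α β γ : σ) (hαβ : α ≠ β) (hαγ : α ≠ γ) (hβγ : β ≠ γ)
    (η : Fin m → σ) (hη : Function.Injective η)
    (hηd : ∀ i, η i ≠ α ∧ η i ≠ β ∧ η i ≠ γ)
    (A : Finset (Fin k → σ)) (hcard : A.card = m + 1)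
    (hA : ∀ w ∈ A, w ⟨0, hk⟩ = α ∧
      (∀ p : Fin k, p ≠ ⟨0, hk⟩ → w p = β ∨ w p = γ) ∧
      (∃ p, w p = β) ∧ (∃ p, w p = γ))
    (D : Finset (Fin k → σ))
    (hD : D = A ∪ Finset.univ.image (fun i : Fin m => (fun _ : Fin k => η i)))
    (n : ℕ) (hn : n = Fintype.card σ)
    (s : Fin n → σ) (hs : Function.Bijective s) :
    m ≤ (Finset.univ.filter
      (fun j : Fin n => ∃ w ∈ D, ∀ i : Fin n, i ≤ j → ∀ p, w p ≠ s i)).card := by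
  classical
  have hmn : m ≤ n := by
    rw [hn]
    simpa using Fintype.card_le_of_injective η hη
  have key : ∀ j : Fin n, (j : ℕ) < m →
      ∃ w ∈ D, ∀ i : Fin n, i ≤ j → ∀ p, w p ≠ s i := by
    intro j hj
    by_cases hcase : ∃ i : Fin m, ∀ i' : Fin n, i' ≤ j → s i' ≠ η i
    · obtain ⟨i, hi⟩ := hcase
      refine ⟨fun _ => η i, ?_, ?_⟩
      · rw [hD]
        exact Finset.mem_union_right _
          (Finset.mem_image.2 ⟨i, Finset.mem_univ _, rfl⟩)
      · intro i' hi' p h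
        exact hi i' hi' h.symm
    · push_neg at hcase
      -- every η i appears among the guesses s i', i' ≤ j
      set B : Finset σ := (Finset.Iic j).image s with hB
      have hηB : (Finset.univ.image η) ⊆ B := by
        intro x hx
        obtain ⟨i, _, rfl⟩ := Finset.mem_image.1 hx
        obtain ⟨i', hi', h⟩ := hcase i
        exact Finset.mem_image.2 ⟨i', Finset.mem_Iic.2 hi', h⟩
      have hcardB : B.card ≤ (j : ℕ) + 1 := by
        calc B.card ≤ (Finset.Iic j).card := Finset.card_image_le
          _ = (j : ℕ) + 1 := by
              simp [Fin.card_Iic]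
      have hcardη : (Finset.univ.image η).card = m := by
        rw [Finset.card_image_of_injective _ hη, Finset.card_univ, Fintype.card_fin]
      have hBeq : B = Finset.univ.image η := by
        refine (Finset.eq_of_subset_of_card_le hηB ?_).symm
        omega
      -- so every guessed letter so far is some η i₀, and any word of A avoids them
      have hAne : A.Nonempty := Finset.card_pos.1 (by omega)
      obtain ⟨w, hw⟩ := hAne
      refine ⟨w, by rw [hD]; exact Finset.mem_union_left _ hw, ?_⟩
      intro i' hi' p h
      have hsB : s i' ∈ B := Finset.mem_image.2 ⟨i', Finset.mem_Iic.2 hi', rfl⟩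
      rw [hBeq] at hsB
      obtain ⟨i₀, _, hi₀⟩ := Finset.mem_image.1 hsB
      obtain ⟨h1, h2, _, _⟩ := hA w hw
      obtain ⟨e1, e2, e3⟩ := hηd i₀
      by_cases hp : p = ⟨0, hk⟩
      · rw [hp, h1] at h; exact e1 (hi₀.trans h.symm)
      · rcases h2 p hp with h' | h'
        · rw [h'] at h; exact e2 (hi₀.trans h.symm)
        · rw [h'] at h; exact e3 (hi₀.trans h.symm)
  calc m = (Finset.univ.image (Fin.castLE hmn)).card := by
        rw [Finset.card_image_of_injective _ (Fin.castLE_injective hmn),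
          Finset.card_univ, Fintype.card_fin]
    _ ≤ _ := by
        apply Finset.card_le_card
        intro j hj
        obtain ⟨x, _, rfl⟩ := Finset.mem_image.1 hj
        simp only [Finset.mem_filter, Finset.mem_univ, true_and]
        exact key _ x.isLt
end

section
/- If S is a dominating set of a finite 3-regular graph G and L is a proper encoding of G, then after the guesser queries all letters of S, at least one query must be answered positively by any consistent setter, and after any single positive answer the secret word is uniquely determined; hence the guesser makes at most |S| − 1 failed guesses before the word is determined. -/
/-- If `S` is a dominating set of a finite 3-regular graph `G` and `w` is a proper encoding
of `G`, then (1) every word of the encoding contains a letter of `S`, so after the guesser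
queries all letters of `S` at least one query is answered positively by any consistent
setter, and (2) a revealed letter at a known position identifies the secret word uniquely;
hence the guesser makes at most `|S| - 1` failed guesses before the word is determined. -/
theorem dominating_set_guesser_wins {V : Type*} [Fintype V] [DecidableEq V]
    (G : SimpleGraph V) [DecidableRel G.Adj] (hreg : G.IsRegularOfDegree 3)
    (w : V → Fin 4 → V)
    (h0 : ∀ v, w v 0 = v)
    (hnb : ∀ v, ({w v 1, w v 2, w v 3} : Finset V) = G.neighborFinset v)
    (hproper : ∀ (u : V) (p : Fin 4), ∃! v, w v p = u)
    (S : Finset V) (hS : ∀ v : V, v ∈ S ∨ ∃ u ∈ S, G.Adj v u) :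
    (∀ v : V, ∃ p : Fin 4, w v p ∈ S) ∧
    (∀ (v v' : V) (p : Fin 4), w v p = w v' p → v = v') := by
  constructor
  · intro v
    rcases hS v with hv | ⟨u, hu, hadj⟩
    · exact ⟨0, by rwa [h0]⟩
    · have : u ∈ ({w v 1, w v 2, w v 3} : Finset V) := by
        rw [hnb]; exact (G.mem_neighborFinset v u).2 hadj
      simp only [Finset.mem_insert, Finset.mem_singleton] at this
      rcases this with h | h | h
      · exact ⟨1, h ▸ hu⟩
      · exact ⟨2, h ▸ hu⟩
      · exact ⟨3, h ▸ hu⟩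
  · intro v v' p h
    obtain ⟨x, _, hx⟩ := hproper (w v' p) p
    exact (hx v h).trans (hx v' rfl).symm
end
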